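/- arXiv:nlin/0206018 — 2 statements merged into one kernel-verified Lean document; each statement's English description precedes it below -/
import Mathlib

section
/- Fix a > 0, λ ∈ ℝ, and t > 0. Then F_a(λ, n) with ε = t/n converges to the Mittag-Leffler function E_a(λ t^a) = Σ_{j=0}^∞ λ^j t^{aj}/Γ(aj+1) as n → ∞. -/
/-!
Writing `Γ(n + aj) / (Γ(n) n^{aj}) = gammaRatio n (aj)`, the `j`-th term of `F_a(λ, n)` is the
`j`-th Mittag-Leffler term times `gammaRatio n (aj)`, so the theorem is dominated convergence for
series (Tannery's theorem). Log-convexity of `Γ` squeezes `gammaRatio x s` between `(1 - 1/x)^s`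
and `(1 + s/x)^s`, which gives the termwise limit `1`, and for `n ≥ N` bounds the `j`-th term by
`(|λ| t^a)^j (1 + aj/N)^{aj} / Γ(aj + 1)`. Since `Γ(s + a + 1) ≥ s^a Γ(s + 1)`, the ratio of
consecutive bounds is eventually at most `|λ| (2 e t / N)^a`, which is `< 1` for large `N`.
-/

open Real Filter Topology

lemma log_Gamma_add_one {y : ℝ} (hy : 0 < y) :
    log (Gamma (y + 1)) = log (Gamma y) + log y := by
  rw [Gamma_add_one hy.ne', log_mul hy.ne' (Gamma_pos_of_pos hy).ne', add_comm]

lemma Gamma_add_le_Gamma_mul_rpow {x s : ℝ} (hx : 0 < x) (hs : 0 ≤ s) :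
    Gamma (x + s) ≤ Gamma x * (x + s) ^ s := by
  rcases hs.eq_or_lt with rfl | hs
  · simp
  have hxs : 0 < x + s := by linarith
  have hslope := convexOn_log_Gamma.slope_mono_adjacent (Set.mem_Ioi.2 hx)
    (Set.mem_Ioi.2 (by linarith : 0 < x + s + 1)) (by linarith : x < x + s) (by linarith)
  simp only [Function.comp, log_Gamma_add_one hxs, add_sub_cancel_left,
    div_one, div_le_iff₀ hs] at hslope
  rw [← log_le_log_iff (Gamma_pos_of_pos hxs) (by positivity),
    log_mul (Gamma_pos_of_pos hx).ne' (by positivity), log_rpow hxs]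
  linarith

lemma Gamma_mul_rpow_le_Gamma_add {x s : ℝ} (hx : 1 < x) (hs : 0 ≤ s) :
    Gamma x * (x - 1) ^ s ≤ Gamma (x + s) := by
  rcases hs.eq_or_lt with rfl | hs
  · simp
  have hx1 : 0 < x - 1 := by linarith
  have hslope := convexOn_log_Gamma.slope_mono_adjacent (Set.mem_Ioi.2 hx1)
    (Set.mem_Ioi.2 (by linarith : 0 < x + s)) (by linarith : x - 1 < x) (by linarith)
  have hlogGamma := log_Gamma_add_one hx1
  rw [sub_add_cancel] at hlogGamma
  simp only [Function.comp, hlogGamma, sub_sub_cancel, add_sub_cancel_left, div_one,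
    le_div_iff₀ hs] at hslope
  rw [← log_le_log_iff (by positivity) (Gamma_pos_of_pos (by linarith)),
    log_mul (Gamma_pos_of_pos (by linarith)).ne' (by positivity), log_rpow hx1]
  linarith

noncomputable def gammaRatio (x s : ℝ) : ℝ := Gamma (x + s) / (Gamma x * x ^ s)

lemma gammaRatio_nonneg {x s : ℝ} (hx : 0 < x) (hs : 0 ≤ s) : 0 ≤ gammaRatio x s :=
  div_nonneg (Gamma_pos_of_pos (by linarith)).le (by positivity)

lemma gammaRatio_le {x s : ℝ} (hx : 0 < x) (hs : 0 ≤ s) :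
    gammaRatio x s ≤ (1 + s / x) ^ s := by
  rw [gammaRatio, div_le_iff₀ (by positivity), one_add_div hx.ne', div_rpow (by linarith) hx.le,
    div_mul_eq_mul_div, le_div_iff₀ (by positivity)]
  nlinarith [Gamma_add_le_Gamma_mul_rpow hx hs, rpow_pos_of_pos hx s]

lemma le_gammaRatio {x s : ℝ} (hx : 1 < x) (hs : 0 ≤ s) :
    (1 - 1 / x) ^ s ≤ gammaRatio x s := by
  have hx0 : 0 < x := by linarith
  rw [gammaRatio, le_div_iff₀ (by positivity), one_sub_div hx0.ne', div_rpow (by linarith) hx0.le,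
    div_mul_eq_mul_div, div_le_iff₀ (by positivity)]
  nlinarith [Gamma_mul_rpow_le_Gamma_add hx hs, rpow_pos_of_pos hx0 s]

lemma tendsto_one_add_div_rpow_atTop (c s : ℝ) :
    Tendsto (fun x : ℝ => (1 + c / x) ^ s) atTop (𝓝 1) := by
  have hcont : ContinuousAt (· ^ s) (1 : ℝ) := continuousAt_rpow_const 1 s (Or.inl one_ne_zero)
  have hbase : Tendsto (fun x : ℝ => 1 + c / x) atTop (𝓝 1) := by
    simpa using tendsto_const_nhds.add (tendsto_const_nhds.div_atTop (tendsto_id (α := ℝ)))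
  simpa [Function.comp_def] using hcont.tendsto.comp hbase

lemma tendsto_gammaRatio_atTop {s : ℝ} (hs : 0 ≤ s) :
    Tendsto (gammaRatio · s) atTop (𝓝 1) := by
  have hlower := tendsto_one_add_div_rpow_atTop (-1) s
  simp only [neg_div, ← sub_eq_add_neg] at hlower
  refine tendsto_of_tendsto_of_tendsto_of_le_of_le' hlower (tendsto_one_add_div_rpow_atTop s s)
    ?_ ?_
  · filter_upwards [eventually_gt_atTop 1] with x hx using le_gammaRatio hx hs
  · filter_upwards [eventually_gt_atTop 0] with x hx using gammaRatio_le hx hs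

lemma one_add_div_rpow_add_le {N s a : ℝ} (hN : 0 < N) (ha : 0 ≤ a) (hs : N + a ≤ s) :
    (1 + (s + a) / N) ^ (s + a) ≤ (2 * exp 1 * s / N) ^ a * (1 + s / N) ^ s := by
  have hs0 : 0 < s := by linarith
  have hsplit : 1 + (s + a) / N = (1 + s / N) * (1 + a / (N + s)) := by
    field_simp
    ring
  have hexp : (1 + a / (N + s)) ^ s ≤ exp a :=
    calc (1 + a / (N + s)) ^ s ≤ exp (a / (N + s)) ^ s := by
          gcongr
          linarith [add_one_le_exp (a / (N + s))]
      _ = exp (a * (s / (N + s))) := by rw [← exp_mul, div_mul_eq_mul_div, mul_div_assoc]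
      _ ≤ exp a := by
          gcongr
          exact mul_le_of_le_one_right ha ((div_le_one (by linarith)).2 (by linarith))
  have hbase : (1 + (s + a) / N) ^ a ≤ (2 * s / N) ^ a := by
    gcongr
    rw [one_add_div hN.ne']
    gcongr
    linarith
  calc (1 + (s + a) / N) ^ (s + a)
      = (1 + s / N) ^ s * (1 + a / (N + s)) ^ s * (1 + (s + a) / N) ^ a := by
        rw [rpow_add (by positivity), hsplit, mul_rpow (by positivity) (by positivity), ← hsplit]
    _ ≤ (1 + s / N) ^ s * exp a * (2 * s / N) ^ a := by gcongr
    _ = (2 * exp 1 * s / N) ^ a * (1 + s / N) ^ s := by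
        rw [show 2 * exp 1 * s / N = exp 1 * (2 * s / N) by ring,
          mul_rpow (exp_pos 1).le (by positivity), exp_one_rpow]
        ring

lemma summable_pow_mul_one_add_rpow_div_Gamma {a c N : ℝ} (ha : 0 < a) (hc : 0 ≤ c)
    (hN : 0 < N) (hcN : c * (2 * exp 1 / N) ^ a < 1) :
    Summable fun j : ℕ => c ^ j * (1 + a * j / N) ^ (a * j) / Gamma (a * j + 1) := by
  refine summable_of_ratio_norm_eventually_le hcN ?_
  filter_upwards [(tendsto_natCast_atTop_atTop.const_mul_atTop ha).eventually_ge_atTop (N + a)]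
    with j hj
  set s := a * (j : ℝ)
  have hs : 0 < s := by linarith
  have hGamma : Gamma (s + 1) * s ^ a ≤ Gamma (s + a + 1) := by
    simpa [add_right_comm] using Gamma_mul_rpow_le_Gamma_add (by linarith : 1 < s + 1) ha.le
  have hsucc : a * ((j + 1 : ℕ) : ℝ) = s + a := by push_cast; ring
  rw [Real.norm_of_nonneg (by positivity), Real.norm_of_nonneg (by positivity), hsucc,
    div_le_iff₀ (Gamma_pos_of_pos (by linarith)), pow_succ]
  have key : (1 + (s + a) / N) ^ (s + a) * Gamma (s + 1) ≤
      (2 * exp 1 / N) ^ a * (1 + s / N) ^ s * Gamma (s + a + 1) :=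
    calc (1 + (s + a) / N) ^ (s + a) * Gamma (s + 1)
        ≤ (2 * exp 1 * s / N) ^ a * (1 + s / N) ^ s * Gamma (s + 1) := by
          gcongr
          exact one_add_div_rpow_add_le hN ha.le hj
      _ = (2 * exp 1 / N) ^ a * (1 + s / N) ^ s * (Gamma (s + 1) * s ^ a) := by
          rw [mul_div_right_comm, mul_rpow (by positivity) hs.le]
          ring
      _ ≤ (2 * exp 1 / N) ^ a * (1 + s / N) ^ s * Gamma (s + a + 1) := by gcongr
  calc c ^ j * c * (1 + (s + a) / N) ^ (s + a)
      = c ^ j * c * ((1 + (s + a) / N) ^ (s + a) * Gamma (s + 1)) / Gamma (s + 1) := by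
        field_simp
    _ ≤ c ^ j * c * ((2 * exp 1 / N) ^ a * (1 + s / N) ^ s * Gamma (s + a + 1)) /
          Gamma (s + 1) := by gcongr
    _ = _ := by ring

lemma eventually_summable_pow_mul_one_add_rpow_div_Gamma {a c : ℝ} (ha : 0 < a) (hc : 0 ≤ c) :
    ∀ᶠ N : ℝ in atTop,
      Summable fun j : ℕ => c ^ j * (1 + a * j / N) ^ (a * j) / Gamma (a * j + 1) := by
  have hcont : ContinuousAt (· ^ a) (0 : ℝ) := continuousAt_rpow_const 0 a (Or.inr ha.le)
  have hsmall : Tendsto (fun N : ℝ => c * (2 * exp 1 / N) ^ a) atTop (𝓝 0) := by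
    simpa [Function.comp_def, zero_rpow ha.ne'] using
      (hcont.tendsto.comp (tendsto_const_nhds.div_atTop (tendsto_id (α := ℝ)))).const_mul c
  filter_upwards [eventually_gt_atTop 0, hsmall.eventually (gt_mem_nhds one_pos)] with N hN hcN
    using summable_pow_mul_one_add_rpow_div_Gamma ha hc hN hcN

lemma mul_div_rpow_mul_Gamma_eq {u t x s : ℝ} (ht : 0 ≤ t) (hx : 0 < x) :
    u * (t / x) ^ s * Gamma (x + s) / (Gamma (s + 1) * Gamma x) =
      u * t ^ s / Gamma (s + 1) * gammaRatio x s := by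
  rw [gammaRatio, div_rpow ht hx.le]
  field_simp [(Gamma_pos_of_pos hx).ne', (rpow_pos_of_pos hx s).ne']

lemma tendsto_mul_div_rpow_mul_Gamma (u : ℝ) {t s : ℝ} (ht : 0 ≤ t) (hs : 0 ≤ s) :
    Tendsto (fun n : ℕ => u * (t / n) ^ s * Gamma (n + s) / (Gamma (s + 1) * Gamma n)) atTop
      (𝓝 (u * t ^ s / Gamma (s + 1))) := by
  have hlim := ((tendsto_gammaRatio_atTop hs).comp tendsto_natCast_atTop_atTop).const_mul
    (u * t ^ s / Gamma (s + 1))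
  rw [mul_one] at hlim
  refine hlim.congr' ?_
  filter_upwards [eventually_gt_atTop 0] with n hn
  rw [Function.comp_apply, mul_div_rpow_mul_Gamma_eq ht (by positivity)]

lemma norm_mul_div_rpow_mul_Gamma_le (u : ℝ) {t x s N : ℝ} (ht : 0 ≤ t) (hs : 0 ≤ s)
    (hN : 0 < N) (hNx : N ≤ x) :
    ‖u * (t / x) ^ s * Gamma (x + s) / (Gamma (s + 1) * Gamma x)‖ ≤
      |u| * t ^ s * (1 + s / N) ^ s / Gamma (s + 1) := by
  have hx : 0 < x := hN.trans_le hNx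
  rw [mul_div_rpow_mul_Gamma_eq ht hx, norm_mul, Real.norm_of_nonneg (gammaRatio_nonneg hx hs),
    norm_div, norm_mul, Real.norm_eq_abs, Real.norm_of_nonneg (rpow_nonneg ht _),
    Real.norm_of_nonneg (Gamma_pos_of_pos (by positivity)).le, div_mul_eq_mul_div]
  gcongr
  exact (gammaRatio_le hx hs).trans (by gcongr)

theorem stmt_5_general (a lam t : ℝ) (ha : 0 < a) (ht : 0 < t) :
    Filter.Tendsto
      (fun n : ℕ => ∑' j : ℕ,
        lam ^ j * (t / n) ^ (a * j) * Real.Gamma ((n : ℝ) + a * j) /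
          (Real.Gamma (a * j + 1) * Real.Gamma (n : ℝ)))
      Filter.atTop
      (nhds (∑' j : ℕ, lam ^ j * t ^ (a * j) / Real.Gamma (a * j + 1))) := by
  obtain ⟨N, hN, hsum⟩ := ((eventually_gt_atTop 0).and (tendsto_natCast_atTop_atTop.eventually
    (eventually_summable_pow_mul_one_add_rpow_div_Gamma ha
      (by positivity : 0 ≤ |lam| * t ^ a)))).exists
  refine tendsto_tsum_of_dominated_convergence hsum
    (fun j => tendsto_mul_div_rpow_mul_Gamma _ ht.le (by positivity)) ?_
  filter_upwards [eventually_ge_atTop N] with n hn j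
  refine (norm_mul_div_rpow_mul_Gamma_le _ ht.le (by positivity) (Nat.cast_pos.2 hN)
    (Nat.cast_le.2 hn)).trans_eq ?_
  rw [abs_pow, mul_pow, ← rpow_mul_natCast ht.le]

/-- With `ε = t/n`, `F_a(λ, n) → E_a(λ t^a)` as `n → ∞`. -/
theorem stmt_5 (a lam t : ℝ) (ha : 0 < a) (ht : 0 < t)
    (hconv : ∀ n : ℕ, Summable (fun j : ℕ =>
      lam ^ j * (t / n) ^ (a * j) * Real.Gamma ((n : ℝ) + a * j) /
        (Real.Gamma (a * j + 1) * Real.Gamma (n : ℝ))))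
    (hE : Summable fun j : ℕ => lam ^ j * t ^ (a * j) / Real.Gamma (a * j + 1)) :
    Filter.Tendsto
      (fun n : ℕ => ∑' j : ℕ,
        lam ^ j * (t / n) ^ (a * j) * Real.Gamma ((n : ℝ) + a * j) /
          (Real.Gamma (a * j + 1) * Real.Gamma (n : ℝ)))
      Filter.atTop
      (nhds (∑' j : ℕ, lam ^ j * t ^ (a * j) / Real.Gamma (a * j + 1))) :=
  stmt_5_general a lam t ha ht
end

section
/- For 0 < a ≤ 1, real j ≥ 1, and integer n ≥ 1, Δ_{−n}^{a−1} M(aj; n) = M(aj − a + 1; n), where Δ_{−n}^{a−1} u_n = ε^{1−a} Σ_{k=0}^{n−1} C(a−1, k)(−1)^k u_{n−k}. -/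
/-- Generalized binomial coefficient `C(x, k) = x(x−1)⋯(x−k+1)/k!`. -/
noncomputable def genBinom (x : ℝ) (k : ℕ) : ℝ :=
  (∏ i ∈ Finset.range k, (x - i)) / (Nat.factorial k)

/-- `M ε b n = ε^(b−1) Γ(n+b−1)/(Γ(b)Γ(n))`. -/
noncomputable def M (ε b : ℝ) (n : ℕ) : ℝ :=
  ε ^ (b - 1) * Real.Gamma ((n : ℝ) + b - 1) / (Real.Gamma b * Real.Gamma (n : ℝ))

/-!
`Γ(b + m) / (Γ(b) m!)` is the rising binomial coefficient `multichoose b m = (-1)^m C(-b, m)`, so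
`M(b; m + 1) = ε^(b-1) (-1)^m C(-b, m)`. The signs `(-1)^k (-1)^(n-1-k)` in the fractional
difference then combine to `(-1)^(n-1)`, and what remains is the Chu–Vandermonde convolution
`∑ C(a-1, k) C(-b, n-1-k) = C(a-1-b, n-1)`; by the first step again this is `M(b-a+1; n)`, the
powers of `ε` matching because `(1-a) + (b-1) = (b-a+1) - 1`.
-/

open Finset Polynomial Nat

lemma genBinom_eq_ringChoose (x : ℝ) (k : ℕ) : genBinom x k = Ring.choose x k := by
  rw [Ring.choose_eq_smul, ← aeval_eq_smeval, aeval_def, ← eval_map, descPochhammer_map,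
    descPochhammer_eval_eq_prod_range, smul_eq_mul, genBinom, div_eq_inv_mul]

lemma genBinom_add (x y : ℝ) (m : ℕ) :
    genBinom (x + y) m = ∑ k ∈ range (m + 1), genBinom x k * genBinom y (m - k) := by
  simp only [genBinom_eq_ringChoose]
  rw [Ring.add_choose_eq m (Commute.all x y),
    Nat.sum_antidiagonal_eq_sum_range_succ (fun i j => Ring.choose x i * Ring.choose y j)]

lemma genBinom_neg (x : ℝ) (m : ℕ) : genBinom (-x) m = (-1) ^ m * Ring.multichoose x m := by
  rw [genBinom_eq_ringChoose, Ring.choose_neg', Units.smul_def, Int.coe_negOnePow_natCast,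
    zsmul_eq_mul]
  push_cast
  rfl

lemma sum_genBinom_mul_neg_one_pow_mul_multichoose (x y : ℝ) (p : ℕ) :
    ∑ k ∈ range (p + 1), genBinom x k * (-1) ^ k * Ring.multichoose y (p - k) =
      Ring.multichoose (y - x) p := by
  refine mul_left_cancel₀ (pow_ne_zero p (neg_ne_zero.mpr one_ne_zero)) ?_
  calc (-1) ^ p * ∑ k ∈ range (p + 1), genBinom x k * (-1) ^ k * Ring.multichoose y (p - k)
      = ∑ k ∈ range (p + 1), genBinom x k * genBinom (-y) (p - k) := by
        rw [mul_sum]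
        refine sum_congr rfl fun k hk => ?_
        have hsign : ((-1 : ℝ)) ^ p = (-1) ^ (p - k) * (-1) ^ k := by
          rw [← pow_add, Nat.sub_add_cancel (Nat.lt_succ_iff.mp (mem_range.mp hk))]
        have hsq : ((-1 : ℝ)) ^ k * (-1) ^ k = 1 := by rw [← mul_pow]; norm_num
        rw [genBinom_neg, hsign]
        linear_combination (genBinom x k * (-1) ^ (p - k) * Ring.multichoose y (p - k)) * hsq
    _ = genBinom (x + -y) p := (genBinom_add x (-y) p).symm
    _ = (-1) ^ p * Ring.multichoose (y - x) p := by rw [← genBinom_neg, neg_sub, sub_eq_add_neg]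

lemma Real.Gamma_add_nat_eq_mul_ascPochhammer {x : ℝ} (hx : 0 < x) (n : ℕ) :
    Real.Gamma (x + n) = Real.Gamma x * (ascPochhammer ℝ n).eval x := by
  induction n with
  | zero => simp
  | succ n ih =>
    rw [Nat.cast_succ, ← add_assoc, Real.Gamma_add_one (by positivity), ih, ascPochhammer_succ_eval]
    ring

lemma Real.Gamma_add_nat_div_eq_multichoose {x : ℝ} (hx : 0 < x) (n : ℕ) :
    Real.Gamma (x + n) / (Real.Gamma x * n !) = Ring.multichoose x n := by
  have hmul := Ring.factorial_nsmul_multichoose_eq_ascPochhammer x n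
  rw [ascPochhammer_smeval_eq_eval, nsmul_eq_mul] at hmul
  rw [Real.Gamma_add_nat_eq_mul_ascPochhammer hx, ← hmul]
  have := Real.Gamma_pos_of_pos hx
  field_simp

lemma M_succ_eq_mul_multichoose (ε : ℝ) {b : ℝ} (hb : 0 < b) (m : ℕ) :
    M ε b (m + 1) = ε ^ (b - 1) * Ring.multichoose b m := by
  rw [M, Nat.cast_succ, Real.Gamma_nat_eq_factorial, mul_div_assoc,
    ← Real.Gamma_add_nat_div_eq_multichoose hb, show (m : ℝ) + 1 + b - 1 = b + m by ring]

theorem stmt_10_general (ε a r : ℝ) (hε : 0 < ε) (ha : 0 < a) (hr : 1 ≤ r)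
    (n : ℕ) (hn : 1 ≤ n) :
    ε ^ (1 - a) * ∑ k ∈ Finset.range n,
        genBinom (a - 1) k * (-1) ^ k * M ε (a * r) (n - k) =
      M ε (a * r - a + 1) n := by
  obtain ⟨p, rfl⟩ : ∃ p, n = p + 1 := ⟨n - 1, by omega⟩
  have hb : 0 < a * r := by nlinarith
  have hb' : 0 < a * r - a + 1 := by nlinarith
  have hsummand : ∀ k ∈ range (p + 1),
      genBinom (a - 1) k * (-1) ^ k * M ε (a * r) (p + 1 - k) =
        genBinom (a - 1) k * (-1) ^ k * Ring.multichoose (a * r) (p - k) * ε ^ (a * r - 1) :=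
    fun k hk => by
      rw [Nat.sub_add_comm (Nat.lt_succ_iff.mp (mem_range.mp hk)), M_succ_eq_mul_multichoose ε hb]
      ring
  rw [sum_congr rfl hsummand, ← sum_mul, sum_genBinom_mul_neg_one_pow_mul_multichoose,
    M_succ_eq_mul_multichoose ε hb',
    show a * r - a + 1 - 1 = (1 - a) + (a * r - 1) by ring, Real.rpow_add hε,
    show a * r - (a - 1) = a * r - a + 1 by ring]
  ring

/-- For `0 < a ≤ 1`, real `r ≥ 1`, integer `n ≥ 1`:
`Δ_{−n}^{a−1} M(ar; n) = M(ar − a + 1; n)`. -/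
theorem stmt_10 (ε a r : ℝ) (hε : 0 < ε) (ha : 0 < a) (ha1 : a ≤ 1) (hr : 1 ≤ r)
    (n : ℕ) (hn : 1 ≤ n) :
    ε ^ (1 - a) * ∑ k ∈ Finset.range n,
        genBinom (a - 1) k * (-1) ^ k * M ε (a * r) (n - k) =
      M ε (a * r - a + 1) n :=
  stmt_10_general ε a r hε ha hr n hn
end
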